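/- arXiv:2601.10830 — 4 statements merged into one kernel-verified Lean document; each statement's English description precedes it below -/
import Mathlib

section
/- Let n > 1, m > 1 be integers such that every prime factor of n divides m. Then the m-graph of ℤ/nℤ has exactly n − 1 edges. -/
def mGraph (m : ℕ) (H : Type*) [AddCommGroup H] : SimpleGraph H where
  Adj a b := a ≠ b ∧ (m • a = b ∨ m • b = a)
  symm := ⟨fun _ _ h => ⟨h.1.symm, h.2.symm⟩⟩
  loopless := ⟨fun _ h => h.1 rfl⟩

instance (m : ℕ) (H : Type*) [AddCommGroup H] [DecidableEq H] :
    DecidableRel (mGraph m H).Adj :=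
  fun a b => inferInstanceAs (Decidable (a ≠ b ∧ (m • a = b ∨ m • b = a)))

/-!
The m-graph is the simple graph underlying the functional graph of `a ↦ m • a`. If a map `f` has
no cycles of length two, `a ↦ s(a, f a)` is a bijection from the points that `f` moves onto the
edges of its simple functional graph. On `ℤ/nℤ`, the hypothesis on prime factors makes `m`
nilpotent, so `m - 1` and `m² - 1` are units: multiplication by `m` fixes only `0` and has no
two-cycles, hence there are exactly `n - 1` edges.
-/

open Finset

def functionalGraph {V : Type*} (f : V → V) : SimpleGraph V :=
  SimpleGraph.fromRel fun a b => f a = b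

instance {V : Type*} [DecidableEq V] (f : V → V) : DecidableRel (functionalGraph f).Adj :=
  fun a b => inferInstanceAs (Decidable (a ≠ b ∧ (f a = b ∨ f b = a)))

theorem functionalGraph_adj {V : Type*} {f : V → V} {a b : V} :
    (functionalGraph f).Adj a b ↔ a ≠ b ∧ (f a = b ∨ f b = a) :=
  Iff.rfl

theorem card_edgeFinset_functionalGraph {V : Type*} [Fintype V] [DecidableEq V] (f : V → V)
    (hf : ∀ a, f (f a) = a → f a = a) :
    #(functionalGraph f).edgeFinset = #{a | f a ≠ a} := by
  symm
  refine card_bij (fun a _ => s(a, f a)) ?mem ?inj ?surj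
  case mem =>
    intro a ha
    rw [SimpleGraph.mem_edgeFinset, SimpleGraph.mem_edgeSet, functionalGraph_adj]
    exact ⟨(mem_filter.mp ha).2.symm, Or.inl rfl⟩
  case inj =>
    intro a ha b hb hab
    rcases Sym2.eq_iff.mp hab with ⟨rfl, -⟩ | ⟨rfl, hba⟩
    · rfl
    · exact absurd (hf b hba) (mem_filter.mp hb).2
  case surj =>
    intro e he
    induction e using Sym2.ind with
    | _ x y =>
      obtain ⟨hxy, rfl | rfl⟩ : x ≠ y ∧ (f x = y ∨ f y = x) := by
        rwa [SimpleGraph.mem_edgeFinset, SimpleGraph.mem_edgeSet, functionalGraph_adj] at he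
      · exact ⟨x, by simpa using hxy.symm, rfl⟩
      · exact ⟨y, by simpa using hxy, Sym2.eq_swap⟩

theorem IsNilpotent.eq_zero_of_mul_eq_self {R : Type*} [Ring R] {r a : R} (hr : IsNilpotent r)
    (h : r * a = a) : a = 0 :=
  hr.isUnit_sub_one.mul_right_eq_zero.mp (by rw [sub_mul, one_mul, h, sub_self])

theorem Nat.dvd_pow_self_of_prime_dvd {n m : ℕ} (hn : n ≠ 0)
    (hp : ∀ p : ℕ, p.Prime → p ∣ n → p ∣ m) : n ∣ m ^ n :=
  (Nat.dvd_prod_primeFactors_pow_self hn).trans <| pow_dvd_pow_of_dvd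
    (Finset.prod_primes_dvd _ (fun _ hp' => (Nat.prime_of_mem_primeFactors hp').prime)
      fun _ hp' => hp _ (Nat.prime_of_mem_primeFactors hp') (Nat.dvd_of_mem_primeFactors hp')) n

theorem ZMod.isNilpotent_natCast_of_prime_dvd {n m : ℕ} [NeZero n]
    (hp : ∀ p : ℕ, p.Prime → p ∣ n → p ∣ m) : IsNilpotent (m : ZMod n) :=
  ⟨n, by rw [← Nat.cast_pow, ZMod.natCast_eq_zero_iff]
         exact Nat.dvd_pow_self_of_prime_dvd (NeZero.ne n) hp⟩

theorem card_filter_nilpotent_mul_ne_self {R : Type*} [Ring R] [Fintype R] [DecidableEq R]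
    {r : R} (hr : IsNilpotent r) : #{a : R | r * a ≠ a} = Fintype.card R - 1 := by
  have : ({a : R | r * a ≠ a} : Finset R) = univ.erase 0 := by
    ext a
    simp only [mem_filter, mem_univ, true_and, mem_erase, and_true]
    exact ⟨fun h h0 => h (by rw [h0, mul_zero]), fun h ha => h (hr.eq_zero_of_mul_eq_self ha)⟩
  rw [this, card_erase_of_mem (mem_univ _), card_univ]

theorem stmt_8_general (n m : ℕ) [NeZero n]
    (hp : ∀ p : ℕ, p.Prime → p ∣ n → p ∣ m) :
    (mGraph m (ZMod n)).edgeFinset.card = n - 1 := by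
  have hnil := ZMod.isNilpotent_natCast_of_prime_dvd hp
  have hsq : IsNilpotent ((m : ZMod n) * m) := (Commute.refl _).isNilpotent_mul_right hnil
  have hcycle (a : ZMod n) (h : m • m • a = a) : m • a = a := by
    simp only [nsmul_eq_mul, ← mul_assoc] at h ⊢
    rw [hsq.eq_zero_of_mul_eq_self h, mul_zero]
  calc #(mGraph m (ZMod n)).edgeFinset
      = #{a : ZMod n | m • a ≠ a} := card_edgeFinset_functionalGraph (m • ·) hcycle
    _ = #{a : ZMod n | (m : ZMod n) * a ≠ a} := by simp only [nsmul_eq_mul]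
    _ = n - 1 := by rw [card_filter_nilpotent_mul_ne_self hnil, ZMod.card]

theorem stmt_8 (n m : ℕ) [NeZero n] (hn : 1 < n) (hm : 1 < m)
    (hp : ∀ p : ℕ, p.Prime → p ∣ n → p ∣ m) :
    (mGraph m (ZMod n)).edgeFinset.card = n - 1 :=
  stmt_8_general n m hp
end

section
/- Let n > 1, m > 1 be integers such that every prime factor of n divides m, let k = gcd(m, n), and write n = q·k. Then the m-graph of ℤ/nℤ has exactly q − 1 vertices of degree k + 1, and exactly n − q nonzero vertices of degree 1. -/
open Finset

lemma mGraph_adj {H : Type*} [AddCommGroup H] {m : ℕ} {a b : H} :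
    (mGraph m H).Adj a b ↔ a ≠ b ∧ (m • a = b ∨ m • b = a) :=
  Iff.rfl

section

variable {H : Type*} [AddCommGroup H] [Fintype H] [DecidableEq H] {m : ℕ}

lemma mGraph_neighborFinset_zero :
    (mGraph m H).neighborFinset 0 = ({b | m • b = 0} : Finset H).erase 0 := by
  ext b
  simp only [SimpleGraph.mem_neighborFinset, mGraph_adj, smul_zero, mem_erase, mem_filter_univ]
  constructor
  · rintro ⟨hb, rfl | hmb⟩
    exacts [absurd rfl hb, ⟨Ne.symm hb, hmb⟩]
  · rintro ⟨hb, hmb⟩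
    exact ⟨Ne.symm hb, .inr hmb⟩

lemma mGraph_degree_zero :
    (mGraph m H).degree 0 = Nat.card (nsmulAddMonoidHom m : H →+ H).ker - 1 := by
  rw [← SimpleGraph.card_neighborFinset_eq_degree, mGraph_neighborFinset_zero,
    card_erase_of_mem (by simp), Nat.card_eq_fintype_card, Fintype.card_subtype]
  simp

lemma card_nsmul_fiber_of_mem_range {a : H} (ha : a ∈ (nsmulAddMonoidHom m : H →+ H).range) :
    #{b : H | m • b = a} = Nat.card (nsmulAddMonoidHom m : H →+ H).ker := by
  have hfib := AddMonoidHom.card_fiber_eq_of_mem_range _ ha ⟨0, map_zero _⟩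
  simp only [nsmulAddMonoidHom_apply] at hfib
  rw [hfib, Nat.card_eq_fintype_card, Fintype.card_subtype]
  simp

variable (hm : ∀ a : H, m • m • a = a → a = 0)
include hm

lemma mGraph_neighborFinset_of_ne_zero {a : H} (ha : a ≠ 0) :
    (mGraph m H).neighborFinset a = insert (m • a) ({b | m • b = a} : Finset H) := by
  have hfix : m • a ≠ a := fun h => ha (hm a (by rw [h, h]))
  ext b
  simp only [SimpleGraph.mem_neighborFinset, mGraph_adj, mem_insert, mem_filter_univ]
  constructor
  · rintro ⟨-, rfl | hb⟩
    exacts [.inl rfl, .inr hb]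
  · rintro (rfl | rfl)
    exacts [⟨hfix.symm, .inl rfl⟩, ⟨fun h => hfix (congrArg (m • ·) h), .inr rfl⟩]

lemma mGraph_degree_of_ne_zero {a : H} (ha : a ≠ 0) :
    (mGraph m H).degree a = #{b | m • b = a} + 1 := by
  rw [← SimpleGraph.card_neighborFinset_eq_degree, mGraph_neighborFinset_of_ne_zero hm ha,
    card_insert_of_notMem]
  simpa using fun h => ha (hm a h)

lemma mGraph_degree_of_mem_range {a : H} (ha₀ : a ≠ 0)
    (ha : a ∈ (nsmulAddMonoidHom m : H →+ H).range) :
    (mGraph m H).degree a = Nat.card (nsmulAddMonoidHom m : H →+ H).ker + 1 := by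
  rw [mGraph_degree_of_ne_zero hm ha₀, card_nsmul_fiber_of_mem_range ha]

lemma mGraph_degree_of_notMem_range {a : H} (ha : a ∉ (nsmulAddMonoidHom m : H →+ H).range) :
    (mGraph m H).degree a = 1 := by
  have ha₀ : a ≠ 0 := by rintro rfl; exact ha (zero_mem _)
  rw [mGraph_degree_of_ne_zero hm ha₀, Nat.add_eq_right, card_eq_zero, filter_eq_empty_iff]
  exact fun b _ hb => ha ⟨b, hb⟩

theorem card_mGraph_degree_eq_card_ker_add_one :
    #{a | (mGraph m H).degree a = Nat.card (nsmulAddMonoidHom m : H →+ H).ker + 1}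
      = Nat.card (nsmulAddMonoidHom m : H →+ H).range - 1 := by
  have hK : 0 < Nat.card (nsmulAddMonoidHom m : H →+ H).ker := Nat.card_pos
  have hdeg : ({a | (mGraph m H).degree a = Nat.card (nsmulAddMonoidHom m : H →+ H).ker + 1} :
      Finset H) = ({a | a ∈ (nsmulAddMonoidHom m : H →+ H).range} : Finset H).erase 0 := by
    ext a
    simp only [mem_filter_univ, mem_erase]
    by_cases ha₀ : a = 0
    · subst ha₀
      rw [mGraph_degree_zero]
      simp only [ne_eq, not_true_eq_false, false_and, iff_false]
      omega
    by_cases ha : a ∈ (nsmulAddMonoidHom m : H →+ H).range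
    · simp only [mGraph_degree_of_mem_range hm ha₀ ha, ne_eq, ha₀, ha, not_false_eq_true,
        and_self]
    · simp only [mGraph_degree_of_notMem_range hm ha, ha, and_false, iff_false]
      omega
  rw [hdeg, card_erase_of_mem (mem_filter.mpr ⟨mem_univ _, zero_mem _⟩),
    Nat.card_eq_fintype_card, Fintype.card_subtype]

theorem card_ne_zero_mGraph_degree_eq_one :
    #{a | a ≠ 0 ∧ (mGraph m H).degree a = 1}
      = Fintype.card H - Nat.card (nsmulAddMonoidHom m : H →+ H).range := by
  have hdeg : ({a | a ≠ 0 ∧ (mGraph m H).degree a = 1} : Finset H)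
      = ({a | a ∈ (nsmulAddMonoidHom m : H →+ H).range} : Finset H)ᶜ := by
    ext a
    simp only [mem_filter_univ, mem_compl]
    by_cases ha : a ∈ (nsmulAddMonoidHom m : H →+ H).range
    · simp only [ha, not_true_eq_false, iff_false, not_and]
      intro ha₀
      rw [mGraph_degree_of_mem_range hm ha₀ ha, Nat.add_eq_right]
      exact Nat.card_pos.ne'
    · simp only [ha, not_false_eq_true, iff_true, mGraph_degree_of_notMem_range hm ha, and_true]
      rintro rfl
      exact ha (zero_mem _)
  rw [hdeg, card_compl, Nat.card_eq_fintype_card, Fintype.card_subtype]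

end

namespace ZMod

variable {n m : ℕ} [NeZero n]

lemma isNilpotent_natCast_of_forall_prime_dvd (hp : ∀ p : ℕ, p.Prime → p ∣ n → p ∣ m) :
    IsNilpotent (m : ZMod n) := by
  rcases eq_or_ne m 0 with rfl | hm
  · exact ⟨1, by simp⟩
  refine ⟨n, ?_⟩
  rw [← Nat.cast_pow, natCast_eq_zero_iff, Nat.dvd_pow_self_iff (NeZero.ne n) hm]
  intro p hpn
  rw [Nat.mem_primeFactors] at hpn ⊢
  exact ⟨hpn.1, hp p hpn.1 hpn.2.1, hm⟩

lemma eq_zero_of_nsmul_nsmul_eq_self (hp : ∀ p : ℕ, p.Prime → p ∣ n → p ∣ m)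
    {a : ZMod n} (ha : m • m • a = a) : a = 0 := by
  have hunit : IsUnit ((m : ZMod n) ^ 2 - 1) :=
    ((isNilpotent_natCast_of_forall_prime_dvd hp).pow_of_pos two_ne_zero).isUnit_sub_one
  refine hunit.mul_right_eq_zero.mp ?_
  simp only [nsmul_eq_mul] at ha
  linear_combination ha

end ZMod

theorem stmt_11_general (n m q : ℕ) [NeZero n]
    (hp : ∀ p : ℕ, p.Prime → p ∣ n → p ∣ m)
    (hq : n = q * Nat.gcd m n) :
    (Finset.univ.filter
        (fun a : ZMod n => (mGraph m (ZMod n)).degree a = Nat.gcd m n + 1)).card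
      = q - 1 ∧
    (Finset.univ.filter
        (fun a : ZMod n => a ≠ 0 ∧ (mGraph m (ZMod n)).degree a = 1)).card
      = n - q := by
  have hm : ∀ a : ZMod n, m • m • a = a → a = 0 := fun _ =>
    ZMod.eq_zero_of_nsmul_nsmul_eq_self hp
  have hker : Nat.card (nsmulAddMonoidHom m : ZMod n →+ ZMod n).ker = Nat.gcd m n := by
    rw [IsAddCyclic.card_nsmulAddMonoidHom_ker, Nat.card_zmod, Nat.gcd_comm]
  have hrange : Nat.card (nsmulAddMonoidHom m : ZMod n →+ ZMod n).range = q := by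
    rw [IsAddCyclic.card_nsmulAddMonoidHom_range, Nat.card_zmod, Nat.gcd_comm]
    exact Nat.div_eq_of_eq_mul_left (Nat.gcd_pos_of_pos_right m (NeZero.pos n)) hq
  constructor
  · rw [← hker, card_mGraph_degree_eq_card_ker_add_one hm, hrange]
  · rw [card_ne_zero_mGraph_degree_eq_one hm, ZMod.card, hrange]

theorem stmt_11 (n m q : ℕ) [NeZero n] (hn : 1 < n) (hm : 1 < m)
    (hp : ∀ p : ℕ, p.Prime → p ∣ n → p ∣ m)
    (hq : n = q * Nat.gcd m n) :
    (Finset.univ.filter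
        (fun a : ZMod n => (mGraph m (ZMod n)).degree a = Nat.gcd m n + 1)).card
      = q - 1 ∧
    (Finset.univ.filter
        (fun a : ZMod n => a ≠ 0 ∧ (mGraph m (ZMod n)).degree a = 1)).card
      = n - q :=
  stmt_11_general n m q hp hq
end

section
/- Let n be an odd integer > 1, k > 1 an integer dividing n such that every prime factor of n divides k, and let w be the least positive integer with n dividing k^w. Then the diameter of the k-graph of ℤ/nℤ equals 2w. -/
/-!
Every vertex `a` reaches `0` along `a, k • a, k² • a, …, kʷ • a = 0`, so the diameter is at most
`2w`. Conversely, each walk from `a` to `b` splits its length as `i + j` with `kⁱ • a = kʲ • b`.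
For `a = 1`, `b = -1` and `i ≤ j` this says `n ∣ kⁱ + kʲ = kⁱ (1 + kʲ⁻ⁱ)`. The second factor is
coprime to `n`: it is `2` if `i = j`, and otherwise no prime factor of `k` divides it. Hence
`n ∣ kⁱ`, so `i ≥ w` and the walk has length at least `2w`.
-/

namespace mGraph

variable {m : ℕ} {H : Type*} [AddCommGroup H]

theorem exists_pow_smul_eq_of_walk {a b : H} (p : (mGraph m H).Walk a b) :
    ∃ i j : ℕ, i + j = p.length ∧ m ^ i • a = m ^ j • b := by
  induction p with
  | nil => exact ⟨0, 0, rfl, rfl⟩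
  | @cons a c b hadj p ih =>
    obtain ⟨i, j, hlen, heq⟩ := ih
    rcases hadj.2 with hac | hca
    · refine ⟨i + 1, j, by simp [← hlen]; ring, ?_⟩
      rw [pow_succ, mul_smul, hac, heq]
    · refine ⟨i, j + 1, by simp [← hlen]; ring, ?_⟩
      rw [← hca, smul_smul, ← pow_succ, pow_succ', mul_smul, heq, smul_smul, ← pow_succ']

theorem le_edist_of_forall_pow_smul_eq {a b : H} {c : ℕ}
    (h : ∀ i j : ℕ, m ^ i • a = m ^ j • b → c ≤ i + j) : (c : ℕ∞) ≤ (mGraph m H).edist a b :=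
  le_iInf fun p => by
    obtain ⟨i, j, hlen, heq⟩ := exists_pow_smul_eq_of_walk p
    exact_mod_cast hlen ▸ h i j heq

theorem edist_smul_le_one (a : H) : (mGraph m H).edist a (m • a) ≤ 1 :=
  SimpleGraph.edist_le_one_iff_adj_or_eq.mpr <|
    (em (a = m • a)).elim Or.inr fun hne => Or.inl ⟨hne, Or.inl rfl⟩

theorem edist_pow_smul_le (a : H) (j : ℕ) : (mGraph m H).edist a (m ^ j • a) ≤ j := by
  induction j with
  | zero => simp
  | succ j ih =>
    calc (mGraph m H).edist a (m ^ (j + 1) • a)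
        ≤ (mGraph m H).edist a (m ^ j • a) + (mGraph m H).edist (m ^ j • a) (m • m ^ j • a) := by
          rw [← mul_smul, ← pow_succ']
          exact SimpleGraph.edist_triangle
      _ ≤ j + 1 := add_le_add ih (edist_smul_le_one _)
      _ = (j + 1 : ℕ) := by push_cast; rfl

theorem ediam_le {w : ℕ} (hw : ∀ a : H, m ^ w • a = 0) : (mGraph m H).ediam ≤ (2 * w : ℕ) :=
  SimpleGraph.ediam_le_of_edist_le fun u v =>
    calc (mGraph m H).edist u v ≤ (mGraph m H).edist u 0 + (mGraph m H).edist 0 v :=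
          SimpleGraph.edist_triangle
      _ ≤ w + w := by
          have hu := edist_pow_smul_le (m := m) u w
          have hv := edist_pow_smul_le (m := m) v w
          rw [hw] at hu hv
          exact add_le_add hu (SimpleGraph.edist_comm.trans_le hv)
      _ = (2 * w : ℕ) := by push_cast; ring

end mGraph

theorem Nat.coprime_one_add_pow {n k : ℕ} (hodd : Odd n) (hp : ∀ p : ℕ, p.Prime → p ∣ n → p ∣ k)
    (d : ℕ) : n.Coprime (1 + k ^ d) := by
  rcases d.eq_zero_or_pos with rfl | hd
  · simpa using hodd
  refine Nat.coprime_of_dvd fun p hprime hpn hpd => hprime.one_lt.ne' <| Nat.dvd_one.mp ?_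
  exact (Nat.dvd_add_left (dvd_pow (hp p hprime hpn) hd.ne')).mp hpd

theorem Nat.dvd_pow_of_dvd_pow_add_pow {n k i j : ℕ} (hodd : Odd n)
    (hp : ∀ p : ℕ, p.Prime → p ∣ n → p ∣ k) (hij : i ≤ j) (h : n ∣ k ^ i + k ^ j) : n ∣ k ^ i := by
  have hfactor : k ^ i + k ^ j = k ^ i * (1 + k ^ (j - i)) := by
    rw [mul_add, mul_one, ← pow_add, Nat.add_sub_cancel' hij]
  rw [hfactor] at h
  exact (Nat.coprime_one_add_pow hodd hp _).dvd_of_dvd_mul_right h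

theorem two_mul_le_edist_one_neg_one {n k w : ℕ} (hn : 1 < n) (hodd : Odd n)
    (hp : ∀ p : ℕ, p.Prime → p ∣ n → p ∣ k) (hwleast : ∀ v : ℕ, 0 < v → n ∣ k ^ v → w ≤ v) :
    ((2 * w : ℕ) : ℕ∞) ≤ (mGraph k (ZMod n)).edist 1 (-1) := by
  have w_le_of_dvd : ∀ i j, i ≤ j → n ∣ k ^ i + k ^ j → w ≤ i := fun i j hij h => by
    have hni := Nat.dvd_pow_of_dvd_pow_add_pow hodd hp hij h
    rcases i.eq_zero_or_pos with rfl | hi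
    · exact absurd (Nat.le_of_dvd one_pos (by simpa using hni)) (by omega)
    · exact hwleast i hi hni
  refine mGraph.le_edist_of_forall_pow_smul_eq fun i j heq => ?_
  have hdvd : n ∣ k ^ i + k ^ j := by
    rw [← ZMod.natCast_eq_zero_iff]
    simpa [nsmul_eq_mul, add_eq_zero_iff_eq_neg] using heq
  rcases le_total i j with hij | hji
  · have := w_le_of_dvd i j hij hdvd; omega
  · have := w_le_of_dvd j i hji (by rwa [add_comm]); omega

theorem stmt_16_general (n k w : ℕ) (hn : 1 < n) (hodd : Odd n)
    (hp : ∀ p : ℕ, p.Prime → p ∣ n → p ∣ k)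
    (hw2 : n ∣ k ^ w)
    (hwleast : ∀ v : ℕ, 0 < v → n ∣ k ^ v → w ≤ v) :
    (mGraph k (ZMod n)).diam = 2 * w := by
  have hkill : ∀ a : ZMod n, k ^ w • a = 0 := fun a => by
    rw [nsmul_eq_mul, (ZMod.natCast_eq_zero_iff _ _).mpr hw2, zero_mul]
  have hediam : (mGraph k (ZMod n)).ediam = (2 * w : ℕ) :=
    le_antisymm (mGraph.ediam_le hkill)
      ((two_mul_le_edist_one_neg_one hn hodd hp hwleast).trans SimpleGraph.edist_le_ediam)
  rw [SimpleGraph.diam, hediam, ENat.toNat_natCast]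

theorem stmt_16 (n k w : ℕ) (hn : 1 < n) (hodd : Odd n)
    (hk : 1 < k) (hkn : k ∣ n)
    (hp : ∀ p : ℕ, p.Prime → p ∣ n → p ∣ k)
    (hw1 : 0 < w) (hw2 : n ∣ k ^ w)
    (hwleast : ∀ v : ℕ, 0 < v → n ∣ k ^ v → w ≤ v) :
    (mGraph k (ZMod n)).diam = 2 * w :=
  stmt_16_general n k w hn hodd hp hw2 hwleast
end

section
/- Let H = ℤ/n₁ℤ × ⋯ × ℤ/nᵢℤ with i ≥ 2, each nⱼ ≥ 2, and let m > 1 be such that every prime factor of n = n₁⋯nᵢ divides m. For each j let dⱼ = gcd(m, nⱼ). Then in the m-graph of H: the degree of the identity (0,…,0) equals d₁d₂⋯dᵢ − 1; any element (a₁,…,aᵢ) with dⱼ ∤ aⱼ for some j has degree 1; any nonzero element with dⱼ | aⱼ for all j has degree d₁d₂⋯dᵢ + 1; and the m-graph of H is a tree. -/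
/-!
Every element is killed by a power of `m`, so iterating `x ↦ m • x` leads from any vertex to `0`
and the graph is connected. A nonzero `x` cannot be fixed by `m` or by `m²`, so its neighbours are
`m • x` together with its `m`-preimages, all distinct: `deg x = #m⁻¹(x) + 1`, whereas
`deg 0 = #m⁻¹(0) - 1`. Summing over `H`, the degrees add up to `2 (|H| - 1)`, so the connected
graph has `|H| - 1` edges and is a tree. In a factor `ZMod k`, `m • y = c` is solvable iff
`gcd(m, k) ∣ c`, and then has as many solutions as the kernel of `m •` on a cyclic group of order
`k`, namely `gcd(m, k)`.
-/

open Finset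

namespace mGraph

variable {H : Type*} [AddCommGroup H] {m : ℕ}

@[simp]
theorem adj_iff {a b : H} : (mGraph m H).Adj a b ↔ a ≠ b ∧ (m • a = b ∨ m • b = a) := Iff.rfl

theorem eq_zero_of_pow_nsmul_eq_self (hH : ∀ x : H, ∃ t, m ^ t • x = 0) {x : H} {t : ℕ}
    (ht : 0 < t) (hx : m ^ t • x = x) : x = 0 := by
  obtain ⟨s, hs⟩ := hH x
  have hfix : ∀ r, (m ^ t) ^ r • x = x := by
    intro r
    induction r with
    | zero => simp
    | succ r ih => rw [pow_succ', mul_smul, ih, hx]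
  obtain ⟨c, hc⟩ : m ^ s ∣ (m ^ t) ^ s := by
    rw [← pow_mul]
    exact pow_dvd_pow m (Nat.le_mul_of_pos_left s ht)
  rw [← hfix s, hc, mul_comm, mul_smul, hs, smul_zero]

theorem reachable_nsmul (x : H) : (mGraph m H).Reachable x (m • x) := by
  by_cases hx : x = m • x
  · exact hx ▸ .rfl
  · exact SimpleGraph.Adj.reachable ⟨hx, .inl rfl⟩

theorem reachable_pow_nsmul (x : H) (t : ℕ) : (mGraph m H).Reachable x (m ^ t • x) := by
  induction t with
  | zero => simp
  | succ t ih => simpa [pow_succ', mul_smul] using ih.trans (reachable_nsmul _)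

theorem connected (hH : ∀ x : H, ∃ t, m ^ t • x = 0) : (mGraph m H).Connected := by
  refine (SimpleGraph.connected_iff_exists_forall_reachable _).2 ⟨0, fun x => ?_⟩
  obtain ⟨t, ht⟩ := hH x
  exact (ht ▸ reachable_pow_nsmul x t).symm

section Fintype

variable [Fintype H] [DecidableEq H]

theorem degree_zero_add_one : (mGraph m H).degree 0 + 1 = #{y : H | m • y = 0} := by
  have : (mGraph m H).neighborFinset 0 = ({y : H | m • y = 0} : Finset H).erase 0 := by
    ext y
    simp only [SimpleGraph.mem_neighborFinset, adj_iff, smul_zero, mem_erase, mem_filter,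
      mem_univ, true_and]
    grind
  rw [SimpleGraph.degree, this, card_erase_add_one (by simp)]

theorem degree_eq_card_fiber_add_one (hH : ∀ x : H, ∃ t, m ^ t • x = 0) {x : H} (hx : x ≠ 0) :
    (mGraph m H).degree x = #{y : H | m • y = x} + 1 := by
  have hfix : ∀ y : H, m • y = x → y ≠ x := by
    rintro y hy rfl
    exact hx (eq_zero_of_pow_nsmul_eq_self hH one_pos (by rwa [pow_one]))
  have hroot : m • x ∉ ({y : H | m • y = x} : Finset H) := by
    simp only [mem_filter, mem_univ, true_and, smul_smul, ← sq]
    exact fun h => hx (eq_zero_of_pow_nsmul_eq_self hH two_pos h)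
  have : (mGraph m H).neighborFinset x =
      insert (m • x) ({y : H | m • y = x} : Finset H) := by
    ext y
    simp only [SimpleGraph.mem_neighborFinset, adj_iff, mem_insert, mem_filter, mem_univ, true_and]
    constructor
    · rintro ⟨-, h | h⟩
      exacts [.inl h.symm, .inr h]
    · rintro (rfl | h)
      exacts [⟨fun h => hfix x h.symm rfl, .inl rfl⟩, ⟨(hfix y h).symm, .inr h⟩]
  rw [SimpleGraph.degree, this, card_insert_of_notMem hroot]

theorem card_edgeFinset_add_one (hH : ∀ x : H, ∃ t, m ^ t • x = 0) :
    #(mGraph m H).edgeFinset + 1 = Fintype.card H := by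
  have hsum : ∑ x, (mGraph m H).degree x + 2 = 2 * Fintype.card H := by
    calc ∑ x, (mGraph m H).degree x + 2
        = ∑ x, (#{y : H | m • y = x} + 1) := by
          rw [← add_sum_erase _ _ (mem_univ 0), ← add_sum_erase _ _ (mem_univ (0 : H)),
            ← degree_zero_add_one, sum_congr rfl fun x hx =>
              degree_eq_card_fiber_add_one hH (ne_of_mem_erase hx)]
          ring
      _ = 2 * Fintype.card H := by
          rw [sum_add_distrib, ← card_eq_sum_card_fiberwise (by simp)]
          simp [two_mul]
  rw [SimpleGraph.sum_degrees_eq_twice_card_edges] at hsum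
  omega

end Fintype

theorem isTree [Finite H] (hH : ∀ x : H, ∃ t, m ^ t • x = 0) : (mGraph m H).IsTree := by
  have := Fintype.ofFinite H
  classical
  refine SimpleGraph.isTree_iff_connected_and_card.2 ⟨connected hH, ?_⟩
  rw [Nat.card_eq_fintype_card, Nat.card_eq_fintype_card, ← SimpleGraph.edgeFinset_card]
  exact card_edgeFinset_add_one hH

end mGraph

theorem Nat.dvd_pow_self_of_forall_prime_dvd {N m : ℕ} (hN : N ≠ 0)
    (h : ∀ p : ℕ, p.Prime → p ∣ N → p ∣ m) : N ∣ m ^ N := by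
  rcases eq_or_ne m 0 with rfl | hm
  · simp [zero_pow hN]
  refine (Nat.dvd_pow_self_iff hN hm).2 fun p hp => ?_
  rw [Nat.mem_primeFactors] at hp ⊢
  exact ⟨hp.1, h p hp.1 hp.2.1, hm⟩

namespace ZMod

theorem exists_nsmul_eq_iff {k : ℕ} [NeZero k] (m : ℕ) (c : ZMod k) :
    (∃ y : ZMod k, m • y = c) ↔ Nat.gcd m k ∣ c.val := by
  constructor
  · rintro ⟨y, rfl⟩
    have hk := Nat.gcd_dvd_right m k
    rw [nsmul_eq_mul, ZMod.val_mul, ZMod.val_natCast]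
    exact (Nat.dvd_mod_iff hk).2 (((Nat.dvd_mod_iff hk).2 (Nat.gcd_dvd_left m k)).mul_right _)
  · rintro ⟨q, hq⟩
    -- Bézout: `gcd m k = m * gcdA m k` modulo `k`
    refine ⟨(Nat.gcdA m k : ZMod k) * q, ?_⟩
    have hbez := congrArg (Int.cast : ℤ → ZMod k) (Nat.gcd_eq_gcd_ab m k)
    push_cast [ZMod.natCast_self] at hbez
    rw [nsmul_eq_mul, ← mul_assoc, ← ZMod.natCast_zmod_val c, hq]
    push_cast
    rw [hbez]
    ring

theorem card_nsmul_fiber {k : ℕ} [NeZero k] (m : ℕ) (c : ZMod k) :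
    #{y : ZMod k | m • y = c} = if Nat.gcd m k ∣ c.val then Nat.gcd m k else 0 := by
  split_ifs with hc
  · have hc' : c ∈ Set.range (nsmulAddMonoidHom (α := ZMod k) m) :=
      (exists_nsmul_eq_iff m c).2 hc
    have hfib := AddMonoidHom.card_fiber_eq_of_mem_range _ hc' ⟨0, map_zero _⟩
    simp only [nsmulAddMonoidHom_apply] at hfib
    have hker := IsAddCyclic.card_nsmulAddMonoidHom_ker (ZMod k) m
    rw [Nat.card_zmod, Nat.gcd_comm, Nat.card_eq_fintype_card, Fintype.card_subtype] at hker
    rw [hfib]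
    simpa using hker
  · rw [card_eq_zero, filter_eq_empty_iff]
    exact fun y _ hy => hc ((exists_nsmul_eq_iff m c).1 ⟨y, hy⟩)

end ZMod

section ProdZMod

variable {ι : Type*} [Fintype ι] {n : ι → ℕ} [∀ j, NeZero (n j)] {m : ℕ}

theorem pow_prod_nsmul_eq_zero (hp : ∀ p : ℕ, p.Prime → p ∣ ∏ j, n j → p ∣ m)
    (x : ∀ j, ZMod (n j)) : m ^ (∏ j, n j) • x = 0 := by
  have hN : ∏ j, n j ≠ 0 := prod_ne_zero_iff.2 fun j _ => NeZero.ne (n j)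
  obtain ⟨c, hc⟩ := Nat.dvd_pow_self_of_forall_prime_dvd hN hp
  funext j
  obtain ⟨d, hd⟩ := dvd_prod_of_mem n (mem_univ j)
  rw [Pi.smul_apply, hc, hd, mul_assoc, mul_comm, mul_smul, nsmul_eq_mul (n j),
    ZMod.natCast_self, zero_mul, smul_zero, Pi.zero_apply]

theorem card_nsmul_fiber_pi [DecidableEq ι] (a : ∀ j, ZMod (n j)) :
    #{x : ∀ j, ZMod (n j) | m • x = a} =
      if ∀ j, Nat.gcd m (n j) ∣ (a j).val then ∏ j, Nat.gcd m (n j) else 0 := by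
  have : ({x | m • x = a} : Finset (∀ j, ZMod (n j))) =
      Fintype.piFinset fun j => {y | m • y = a j} := by
    ext x
    simp [funext_iff]
  rw [this, Fintype.card_piFinset, ← Fintype.prod_ite_zero]
  exact prod_congr rfl fun j _ => ZMod.card_nsmul_fiber m (a j)

end ProdZMod

theorem stmt_19_general (i : ℕ) (n : Fin i → ℕ)
    [∀ j, NeZero (n j)]
    (m : ℕ)
    (hp : ∀ p : ℕ, p.Prime → p ∣ (∏ j, n j) → p ∣ m) :
    (mGraph m (∀ j, ZMod (n j))).degree 0 = (∏ j, Nat.gcd m (n j)) - 1 ∧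
    (∀ a : ∀ j, ZMod (n j), (∃ j, ¬ Nat.gcd m (n j) ∣ (a j).val) →
      (mGraph m (∀ j, ZMod (n j))).degree a = 1) ∧
    (∀ a : ∀ j, ZMod (n j), a ≠ 0 → (∀ j, Nat.gcd m (n j) ∣ (a j).val) →
      (mGraph m (∀ j, ZMod (n j))).degree a = (∏ j, Nat.gcd m (n j)) + 1) ∧
    (mGraph m (∀ j, ZMod (n j))).IsTree := by
  have hH : ∀ x : ∀ j, ZMod (n j), ∃ t, m ^ t • x = 0 :=
    fun x => ⟨_, pow_prod_nsmul_eq_zero hp x⟩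
  refine ⟨?_, fun a ha => ?_, fun a ha0 ha => ?_, mGraph.isTree hH⟩
  · have h0 := mGraph.degree_zero_add_one (m := m) (H := ∀ j, ZMod (n j))
    rw [card_nsmul_fiber_pi, if_pos fun j => by simp] at h0
    omega
  · have ha0 : a ≠ 0 := by
      rintro rfl
      simp at ha
    rw [mGraph.degree_eq_card_fiber_add_one hH ha0, card_nsmul_fiber_pi, if_neg (not_forall.2 ha)]
  · rw [mGraph.degree_eq_card_fiber_add_one hH ha0, card_nsmul_fiber_pi, if_pos ha]

theorem stmt_19 (i : ℕ) (hi : 2 ≤ i) (n : Fin i → ℕ)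
    (hn : ∀ j, 2 ≤ n j) [∀ j, NeZero (n j)]
    (m : ℕ) (hm : 1 < m)
    (hp : ∀ p : ℕ, p.Prime → p ∣ (∏ j, n j) → p ∣ m) :
    (mGraph m (∀ j, ZMod (n j))).degree 0 = (∏ j, Nat.gcd m (n j)) - 1 ∧
    (∀ a : ∀ j, ZMod (n j), (∃ j, ¬ Nat.gcd m (n j) ∣ (a j).val) →
      (mGraph m (∀ j, ZMod (n j))).degree a = 1) ∧
    (∀ a : ∀ j, ZMod (n j), a ≠ 0 → (∀ j, Nat.gcd m (n j) ∣ (a j).val) →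
      (mGraph m (∀ j, ZMod (n j))).degree a = (∏ j, Nat.gcd m (n j)) + 1) ∧
    (mGraph m (∀ j, ZMod (n j))).IsTree :=
  stmt_19_general i n m hp
end
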